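/- arXiv:alg-geom/9608029 — 3 statements merged into one kernel-verified Lean document; each statement's English description precedes it below -/
import Mathlib

section
/- Let g be a rational function of one complex variable whose only pole is at 0 and such that |g(Y)| = O(|Y|^{-2}) as |Y| → ∞, let 0 ≤ γ < 1, and set f(Y) = g(Y) e^{-γ Y}. Then the sum Σ_{l ∈ ℤ, l ≠ 0} f(2πi l) converges and equals Res_{Y=0} ( f(Y) / (e^{-Y} - 1) ). -/
/-!
Both sides are linear in `P`, so it suffices to treat `P = Xᵏ`, that is `f(Y) = e^{-γY} / Yᵐ`
with `m = N - k ≥ 2`. By the generating function of the Bernoulli polynomials,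
`Y e^{-γY} / (e^{-Y} - 1) = ∑ bₙ Yⁿ` with `bₙ = (-1)ⁿ⁺¹ Bₙ(γ) / n!` for `|Y| < 2π`, so the residue
at `0` of `e^{-γY} / (Yᵐ (e^{-Y} - 1))` is `bₘ`. On the other side, the Fourier expansion of
`Bₘ` on `[0, 1]` reads `∑_{l ≠ 0} e^{-2πilγ} / (2πil)ᵐ = bₘ`; it also gives `|bₘ| ≤ C (2π)⁻ᵐ`,
which is what makes the Taylor series converge on the circle of integration.
-/

open Real Complex Finset
open scoped Nat

/-- The Taylor coefficients at `0` of `y e^{-γy} / (e^{-y} - 1)`. -/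
noncomputable def bernoulliCoeff (γ : ℝ) (n : ℕ) : ℂ :=
  (-1) ^ (n + 1) * bernoulliFun n γ / n !

theorem hasSum_cexp_div_two_pi_I_mul_pow {γ : ℝ} (hγ : γ ∈ Set.Icc 0 1) {m : ℕ} (hm : 2 ≤ m) :
    HasSum (fun l : {l : ℤ // l ≠ 0} =>
        cexp (-(γ : ℂ) * (2 * π * I * l)) / (2 * π * I * l) ^ m)
      (bernoulliCoeff γ m) := by
  have hm0 : m ≠ 0 := by omega
  have h2πI : (2 * π * I : ℂ) ≠ 0 := by simp [Real.pi_ne_zero, I_ne_zero]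
  have hneg := (Equiv.neg ℤ).hasSum_iff.mpr (hasSum_one_div_pow_mul_fourier_mul_bernoulliFun hm hγ)
  refine (hasSum_subtype_iff_of_support_subset (f := fun l : ℤ =>
    cexp (-(γ : ℂ) * (2 * π * I * l)) / (2 * π * I * l) ^ m) (s := {l : ℤ | l ≠ 0}) ?_).mpr ?_
  · -- the `l = 0` term is `e⁰ / 0 = 0`
    intro l hl h0
    simp [Set.mem_ofPred_eq.mp h0, zero_pow hm0] at hl
  · have hcoeff : (-1) ^ m / (2 * π * I) ^ m * (-(2 * π * I) ^ m / m ! * bernoulliFun m γ)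
        = bernoulliCoeff γ m := by
      unfold bernoulliCoeff
      field_simp
      ring
    rw [← hcoeff]
    refine (hneg.mul_left ((-1) ^ m / (2 * π * I) ^ m)).congr_fun ?_
    intro l
    simp only [Function.comp_apply, Equiv.neg_apply, fourier_coe_apply, Int.cast_neg]
    have hsign : ((-1 : ℂ)) ^ m * ((-1) ^ m)⁻¹ = 1 := mul_inv_cancel₀ (by simp)
    rw [ofReal_one, div_one, neg_pow (l : ℂ),
      show 2 * π * I * -(l : ℂ) * γ = -γ * (2 * π * I * l) by ring]
    linear_combination
      (-cexp (-(γ : ℂ) * (2 * π * I * l)) / ((2 * π * I) ^ m * (l : ℂ) ^ m)) * hsign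

theorem norm_bernoulliCoeff_le {γ : ℝ} (hγ : γ ∈ Set.Icc 0 1) {m : ℕ} (hm : 2 ≤ m) :
    ‖bernoulliCoeff γ m‖ ≤ (∑' l : {l : ℤ // l ≠ 0}, 1 / (l : ℝ) ^ 2) / (2 * π) ^ m := by
  have hsum : Summable fun l : {l : ℤ // l ≠ 0} => 1 / (l : ℝ) ^ 2 :=
    (Real.summable_one_div_int_pow.mpr one_lt_two).subtype _
  refine (hasSum_cexp_div_two_pi_I_mul_pow hγ hm).norm_le_of_bounded
    (hsum.hasSum.div_const _) fun l => ?_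
  have hl : 1 ≤ |(l : ℝ)| := by exact_mod_cast Int.one_le_abs l.2
  have hexp : ‖cexp (-(γ : ℂ) * (2 * π * I * l))‖ = 1 := by
    rw [show -(γ : ℂ) * (2 * π * I * l) = ((-(γ * 2 * π * l) : ℝ) : ℂ) * I by push_cast; ring]
    exact norm_exp_ofReal_mul_I _
  have hden : ‖(2 * π * I * l : ℂ)‖ = 2 * π * |(l : ℝ)| := by
    simp [abs_of_pos Real.pi_pos]
  rw [norm_div, hexp, norm_pow, hden, mul_pow, div_div, mul_comm ((l : ℝ) ^ 2), ← sq_abs]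
  gcongr

theorem summable_norm_bernoulliCoeff_mul_pow {γ : ℝ} (hγ : γ ∈ Set.Icc 0 1) {y : ℂ}
    (hy : ‖y‖ < 2 * π) : Summable fun n => ‖bernoulliCoeff γ n * y ^ n‖ := by
  set K := ∑' l : {l : ℤ // l ≠ 0}, 1 / (l : ℝ) ^ 2
  have hq : ‖y‖ / (2 * π) < 1 := (div_lt_one (by positivity)).mpr hy
  refine Summable.of_norm_bounded_eventually_nat
    ((summable_geometric_of_lt_one (by positivity) hq).mul_left K) ?_
  filter_upwards [Filter.eventually_ge_atTop 2] with n hn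
  calc ‖‖bernoulliCoeff γ n * y ^ n‖‖ = ‖bernoulliCoeff γ n‖ * ‖y‖ ^ n := by
        rw [norm_norm, norm_mul, norm_pow]
    _ ≤ K / (2 * π) ^ n * ‖y‖ ^ n := by gcongr; exact norm_bernoulliCoeff_le hγ hn
    _ = K * (‖y‖ / (2 * π)) ^ n := by rw [div_pow]; ring

theorem sum_range_choose_mul_bernoulliFun (n : ℕ) (x : ℝ) :
    ∑ k ∈ range (n + 1), ((n + 1).choose k : ℝ) * bernoulliFun k x = (n + 1) * x ^ n := by
  have h := congrArg (Polynomial.aeval x) (Polynomial.sum_bernoulli n)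
  simp only [map_sum, map_smul, Polynomial.aeval_monomial] at h
  simp only [bernoulliFun, Polynomial.eval_map_algebraMap]
  simpa [Rat.smul_def] using h

/-- `(-1)ʲ⁺¹ / (j + 1)!` are the Taylor coefficients of `(e^{-y} - 1) / y`. -/
theorem sum_antidiagonal_bernoulliCoeff_mul (γ : ℝ) (n : ℕ) :
    ∑ p ∈ antidiagonal n, bernoulliCoeff γ p.1 * ((-1) ^ (p.2 + 1) / (p.2 + 1)!)
      = (-γ) ^ n / n ! := by
  have hterm : ∀ k ∈ range (n + 1), bernoulliCoeff γ k * ((-1) ^ (n - k + 1) / (n - k + 1)!)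
      = (-1) ^ n / (n + 1)! * (((n + 1).choose k : ℝ) * bernoulliFun k γ : ℝ) := by
    intro k hk
    have hkn : k ≤ n := Nat.lt_succ_iff.mp (mem_range.mp hk)
    have hfact : ((n + 1).choose k : ℂ) * k ! * (n - k + 1)! = (n + 1)! := by
      rw [show n - k + 1 = n + 1 - k by omega]
      exact_mod_cast Nat.choose_mul_factorial_mul_factorial (by omega)
    have hsign : (-1 : ℂ) ^ (k + 1) * (-1) ^ (n - k + 1) = (-1) ^ n := by
      rw [← pow_add, show k + 1 + (n - k + 1) = n + 2 by omega, pow_add]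
      norm_num
    have hchoose : ((n + 1).choose k : ℂ) ≠ 0 := by exact_mod_cast (Nat.choose_pos (by omega)).ne'
    rw [bernoulliCoeff, ← hfact, ← hsign]
    push_cast
    field_simp
  rw [Finset.Nat.sum_antidiagonal_eq_sum_range_succ_mk, sum_congr rfl hterm, ← mul_sum,
    ← ofReal_sum, sum_range_choose_mul_bernoulliFun, Nat.factorial_succ, neg_pow (γ : ℂ)]
  push_cast
  field_simp

theorem hasSum_pow_div_factorial_cexp (z : ℂ) : HasSum (fun n => z ^ n / n !) (cexp z) := by
  rw [exp_eq_exp_ℂ]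
  exact NormedSpace.expSeries_div_hasSum_exp z

theorem tsum_bernoulliCoeff_mul_pow_mul {γ : ℝ} (hγ : γ ∈ Set.Icc 0 1) {y : ℂ}
    (hy : ‖y‖ < 2 * π) :
    (∑' n, bernoulliCoeff γ n * y ^ n) * (cexp (-y) - 1) = y * cexp (-γ * y) := by
  set u : ℕ → ℂ := fun j => (-1) ^ (j + 1) / (j + 1)! * y ^ j
  have hu : Summable fun j => ‖u j‖ := by
    refine (Real.summable_pow_div_factorial ‖y‖).of_nonneg_of_le (fun _ => norm_nonneg _)
      fun j => ?_
    simp only [u, norm_mul, norm_div, norm_pow, norm_neg, norm_one, one_pow, Complex.norm_natCast]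
    rw [one_div_mul_eq_div]
    gcongr
    exact j.le_succ
  have hexp_sub : cexp (-y) - 1 = y * ∑' j, u j := by
    have h := (hasSum_nat_add_iff' 1).mpr (hasSum_pow_div_factorial_cexp (-y))
    simp only [range_one, sum_singleton, pow_zero, Nat.factorial_zero, Nat.cast_one,
      div_one] at h
    rw [← h.tsum_eq, ← tsum_mul_left]
    refine tsum_congr fun j => ?_
    simp only [u]
    rw [neg_pow, pow_succ]
    ring
  have hexp : cexp (-γ * y) = ∑' n, (-γ) ^ n / n ! * y ^ n := by
    rw [← (hasSum_pow_div_factorial_cexp (-γ * y)).tsum_eq]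
    exact tsum_congr fun n => by ring
  rw [hexp_sub, hexp, mul_left_comm, tsum_mul_tsum_eq_tsum_sum_antidiagonal_of_summable_norm
    (summable_norm_bernoulliCoeff_mul_pow hγ hy) hu]
  congr 1
  refine tsum_congr fun n => ?_
  rw [← sum_antidiagonal_bernoulliCoeff_mul, sum_mul]
  refine sum_congr rfl fun p hp => ?_
  rw [← mem_antidiagonal.mp hp, pow_add]
  ring

theorem circleIntegral_tsum_mul_pow_div_pow {c : ℕ → ℂ} {r : ℝ} (hr : 0 < r)
    (hc : Summable fun n => ‖c n‖ * r ^ n) (m : ℕ) :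
    ∮ z in C(0, r), (∑' n, c n * z ^ n) / z ^ (m + 1) = 2 * π * I * c m := by
  have hz0 : ∀ θ, circleMap 0 r θ ≠ 0 := fun θ => circleMap_ne_center hr.ne'
  have hzr : ∀ θ, ‖circleMap 0 r θ‖ = r := fun θ => by rw [norm_circleMap_zero, abs_of_pos hr]
  have hterm : ∀ n, (∮ z in C(0, r), c n * z ^ n / z ^ (m + 1))
      = if n = m then 2 * π * I * c m else 0 := by
    intro n
    have hzpow : Set.EqOn (fun z => c n * z ^ n / z ^ (m + 1))
        (fun z => c n * (z - 0) ^ ((n : ℤ) - (m + 1))) (Metric.sphere 0 r) := by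
      intro z hz
      have hz : z ≠ 0 := Metric.ne_of_mem_sphere hz hr.ne'
      simp only [sub_zero, mul_div_assoc, zpow_sub₀ hz, zpow_natCast]
      norm_cast
    rw [circleIntegral.integral_congr hr.le hzpow, circleIntegral.integral_const_mul]
    split_ifs with hnm
    · rw [hnm, show (m : ℤ) - (m + 1) = -1 by ring, circleIntegral.integral_congr hr.le
        (fun z _ => zpow_neg_one (z - 0)),
        circleIntegral.integral_sub_inv_of_mem_ball (Metric.mem_ball_self hr)]
      ring
    · rw [circleIntegral.integral_sub_zpow_of_ne (by omega), mul_zero]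
  have h : HasSum (fun n => ∮ z in C(0, r), c n * z ^ n / z ^ (m + 1))
      (∮ z in C(0, r), (∑' n, c n * z ^ n) / z ^ (m + 1)) :=
    intervalIntegral.hasSum_integral_of_dominated_convergence (fun n _ => ‖c n‖ * r ^ n / r ^ m)
      (fun n => ?_) (fun n => ?_) ?_ intervalIntegrable_const ?_
  · simp only [hterm] at h
    exact h.unique (hasSum_ite_eq m _)
  · simp only [deriv_circleMap]
    exact Continuous.aestronglyMeasurable <| by
      fun_prop (disch := exact fun θ => pow_ne_zero _ (hz0 θ))
  · refine Filter.Eventually.of_forall fun θ _ => le_of_eq ?_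
    simp only [deriv_circleMap, smul_eq_mul, norm_mul, norm_div, norm_pow, hzr, norm_I]
    field_simp
    ring
  · exact Filter.Eventually.of_forall fun θ _ => hc.div_const _
  · refine Filter.Eventually.of_forall fun θ _ => ?_
    have hs : Summable fun n => c n * circleMap 0 r θ ^ n := by
      refine Summable.of_norm (hc.congr fun n => ?_)
      rw [norm_mul, norm_pow, hzr]
    exact (hs.hasSum.div_const _).const_smul _

theorem cexp_neg_ne_one {y : ℂ} (hy0 : y ≠ 0) (hy : ‖y‖ < 2 * π) : cexp (-y) ≠ 1 := by
  intro h
  obtain ⟨n, hn⟩ := exp_eq_one_iff.mp h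
  have hn0 : n ≠ 0 := by
    rintro rfl
    simp_all
  have h1 : (1 : ℝ) ≤ |(n : ℝ)| := by exact_mod_cast Int.one_le_abs hn0
  have hnorm : ‖y‖ = |(n : ℝ)| * (2 * π) := by
    rw [← norm_neg, hn, norm_mul, norm_intCast]
    simp [abs_of_pos Real.pi_pos]
  nlinarith [Real.pi_pos]

theorem circleIntegral_cexp_div_pow_div_cexp_neg_sub_one {γ : ℝ} (hγ : γ ∈ Set.Icc 0 1)
    {r : ℝ} (hr0 : 0 < r) (hr : r < 2 * π) (m : ℕ) :
    ∮ y in C(0, r), cexp (-γ * y) / y ^ m / (cexp (-y) - 1) = 2 * π * I * bernoulliCoeff γ m := by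
  have hsum : Summable fun n => ‖bernoulliCoeff γ n‖ * r ^ n := by
    have h := summable_norm_bernoulliCoeff_mul_pow hγ (y := r) (by simpa [abs_of_pos hr0])
    simpa [norm_mul, norm_pow, abs_of_pos hr0] using h
  rw [← circleIntegral_tsum_mul_pow_div_pow hr0 hsum m]
  refine circleIntegral.integral_congr hr0.le fun y hy => ?_
  have hyr : ‖y‖ = r := by simpa using hy
  have hy0 : y ≠ 0 := Metric.ne_of_mem_sphere hy hr0.ne'
  have hy2π : ‖y‖ < 2 * π := hyr ▸ hr
  have hE : cexp (-y) - 1 ≠ 0 := sub_ne_zero.mpr (cexp_neg_ne_one hy0 hy2π)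
  have hgen := tsum_bernoulliCoeff_mul_pow_mul hγ hy2π
  rw [neg_mul] at hgen
  field_simp
  linear_combination (-y ^ m) * hgen

theorem circleIntegral.integral_finsetSum {ι : Type*} {E : Type*} [NormedAddCommGroup E]
    [NormedSpace ℂ E] {s : Finset ι} {f : ι → ℂ → E} {c : ℂ} {R : ℝ}
    (hf : ∀ i ∈ s, CircleIntegrable (f i) c R) :
    ∮ z in C(c, R), ∑ i ∈ s, f i z = ∑ i ∈ s, ∮ z in C(c, R), f i z := by
  simp only [circleIntegral, smul_sum]
  exact intervalIntegral.integral_finsetSum fun i hi => (hf i hi).out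

theorem Polynomial.eval_mul_div_pow_eq_sum {K : Type*} [Field K] {P : Polynomial K} {N : ℕ}
    (hN : P.natDegree ≤ N) {w : K} (hw : w ≠ 0) (e : K) :
    P.eval w * e / w ^ N = ∑ k ∈ range (P.natDegree + 1), P.coeff k * (e / w ^ (N - k)) := by
  rw [eval_eq_sum_range, sum_mul, sum_div]
  refine sum_congr rfl fun k hk => ?_
  rw [← pow_mul_pow_sub w ((Nat.lt_succ_iff.mp (mem_range.mp hk)).trans hN)]
  field_simp

theorem circleIntegral_eval_mul_cexp_div_pow_div_cexp_neg_sub_one {P : Polynomial ℂ} {N : ℕ}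
    (hN : P.natDegree ≤ N) {γ : ℝ} (hγ : γ ∈ Set.Icc 0 1) {r : ℝ} (hr0 : 0 < r)
    (hr : r < 2 * π) :
    ∮ y in C(0, r), (P.eval y * cexp (-γ * y) / y ^ N) / (cexp (-y) - 1)
      = 2 * π * I * ∑ k ∈ range (P.natDegree + 1), P.coeff k * bernoulliCoeff γ (N - k) := by
  have hy0 : ∀ y ∈ Metric.sphere (0 : ℂ) r, y ≠ 0 := fun y hy =>
    Metric.ne_of_mem_sphere hy hr0.ne'
  have hE : ∀ y ∈ Metric.sphere (0 : ℂ) r, cexp (-y) - 1 ≠ 0 := fun y hy =>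
    sub_ne_zero.mpr (cexp_neg_ne_one (hy0 y hy) (by rwa [mem_sphere_zero_iff_norm.mp hy]))
  have hsplit : Set.EqOn (fun y => (P.eval y * cexp (-γ * y) / y ^ N) / (cexp (-y) - 1))
      (fun y => ∑ k ∈ range (P.natDegree + 1),
        P.coeff k * (cexp (-γ * y) / y ^ (N - k) / (cexp (-y) - 1)))
      (Metric.sphere 0 r) := fun y hy => by
    dsimp only
    rw [P.eval_mul_div_pow_eq_sum hN (hy0 y hy), sum_div]
    simp only [mul_div_assoc]
  rw [circleIntegral.integral_congr hr0.le hsplit, circleIntegral.integral_finsetSum, mul_sum]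
  · refine sum_congr rfl fun k _ => ?_
    rw [circleIntegral.integral_const_mul,
      circleIntegral_cexp_div_pow_div_cexp_neg_sub_one hγ hr0 hr]
    ring
  · exact fun k _ => ContinuousOn.circleIntegrable hr0.le <| by
      fun_prop (disch := first | exact hE | exact fun y hy => pow_ne_zero _ (hy0 y hy))

theorem hasSum_eval_mul_cexp_div_pow {P : Polynomial ℂ} {N : ℕ} (hN : P.natDegree + 2 ≤ N)
    {γ : ℝ} (hγ : γ ∈ Set.Icc 0 1) :
    HasSum (fun l : {l : ℤ // l ≠ 0} =>
        P.eval (2 * π * I * l) * cexp (-γ * (2 * π * I * l)) / (2 * π * I * l) ^ N)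
      (∑ k ∈ range (P.natDegree + 1), P.coeff k * bernoulliCoeff γ (N - k)) := by
  refine (hasSum_sum fun k hk => (hasSum_cexp_div_two_pi_I_mul_pow hγ
    (m := N - k) (by rw [mem_range] at hk; omega)).mul_left (P.coeff k)).congr_fun fun l => ?_
  exact P.eval_mul_div_pow_eq_sum (by omega) (by simp [Real.pi_ne_zero, I_ne_zero, l.2]) _

/-- Let `g(Y) = P(Y)/Y^N` be a rational function whose only pole is at `0` and which is
`O(|Y|⁻²)` at infinity (i.e. `deg P + 2 ≤ N`), let `0 ≤ γ < 1` and `f(Y) = g(Y) e^(-γY)`.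
Then `Σ_{l ∈ ℤ, l ≠ 0} f(2πil)` converges and equals `Res_{Y=0} (f(Y)/(e^(-Y)-1))`, the
residue being expressed as `(2πi)⁻¹` times the integral over a circle of radius `0 < r < 1`
about `0` (which encloses no other pole of the integrand). -/
theorem stmt_3 (P : Polynomial ℂ) (N : ℕ) (hN : P.natDegree + 2 ≤ N)
    (γ : ℝ) (hγ0 : 0 ≤ γ) (hγ1 : γ < 1) (r : ℝ) (hr0 : 0 < r) (hr1 : r < 1) :
    HasSum
      (fun l : {l : ℤ // l ≠ 0} =>
        P.eval (2 * (π : ℂ) * Complex.I * (l.1 : ℂ))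
          * Complex.exp (-(γ : ℂ) * (2 * (π : ℂ) * Complex.I * (l.1 : ℂ)))
          / (2 * (π : ℂ) * Complex.I * (l.1 : ℂ)) ^ N)
      ((2 * (π : ℂ) * Complex.I)⁻¹ *
        ∮ y in C(0, r),
          (P.eval y * Complex.exp (-(γ : ℂ) * y) / y ^ N) / (Complex.exp (-y) - 1)) := by
  have hγ : γ ∈ Set.Icc 0 1 := ⟨hγ0, hγ1.le⟩
  have hr : r < 2 * π := by linarith [Real.pi_gt_three]
  rw [circleIntegral_eval_mul_cexp_div_pow_div_cexp_neg_sub_one (by omega) hγ hr0 hr,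
    inv_mul_cancel_left₀ (by simp [Real.pi_ne_zero, I_ne_zero])]
  exact hasSum_eval_mul_cexp_div_pow hN hγ
end

section
/- Let n ≥ 2 and g ≥ 1, and let c = diag(c_1, …, c_n) ∈ SU(n) be a diagonal matrix such that no product of a proper nonempty subset of {c_1, …, c_n} equals 1. Suppose h_1, …, h_{2g} ∈ SU(n) satisfy ∏_{j=1}^{g} [h_{2j-1}, h_{2j}] = c, where [a,b] = a b a^{-1} b^{-1}. If a diagonal matrix t = diag(t_1, …, t_n) ∈ SU(n) commutes with every h_j, then t is a scalar matrix, i.e. t_1 = t_2 = … = t_n. -/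
/-!
Since `diag t` commutes with every `h_j`, each `h_j` preserves the eigenspace decomposition of
`diag t`: it is block diagonal for the partition `{i | t i = s} ⊔ {i | t i ≠ s}`. On such matrices
`M ↦ det` of the `{i | t i = s}`-block is multiplicative, so it kills every commutator and hence
`∏ [h_{2j}, h_{2j+1}] = diag c`, whose block determinant is `∏_{t i = s} c i`. If `t` took two
values, `s = t i` would make this a proper nonempty subproduct of the `c i` equal to `1`.
-/

namespace Matrix

variable {ι R : Type*} [Fintype ι] [DecidableEq ι] [CommRing R]

theorem commute_nonsing_inv_right {A B : Matrix ι ι R} (hA : IsUnit A.det) (h : Commute B A) :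
    Commute B A⁻¹ := by
  lift A to (Matrix ι ι R)ˣ using (isUnit_iff_isUnit_det A).2 hA
  rw [← coe_units_inv]
  exact h.units_inv_right

theorem apply_eq_zero_of_commute_diagonal [NoZeroDivisors R] {t : ι → R} {M : Matrix ι ι R}
    (hM : Commute (diagonal t) M) {a b : ι} (hab : t a ≠ t b) : M a b = 0 := by
  have hentry := congr_fun₂ hM.eq a b
  rw [diagonal_mul, mul_diagonal] at hentry
  have : (t a - t b) * M a b = 0 := by linear_combination hentry
  exact (mul_eq_zero.1 this).resolve_left (sub_ne_zero.2 hab)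

variable [DecidableEq R]

noncomputable def eigenblockDet (t : ι → R) (s : R) (M : Matrix ι ι R) : R :=
  (M.toBlock (t · = s) (t · = s)).det

variable {t : ι → R} {s : R}

@[simp]
theorem eigenblockDet_one : eigenblockDet t s 1 = 1 := by
  rw [eigenblockDet, ← diagonal_one, toBlock_diagonal_self, diagonal_one, det_one]

theorem eigenblockDet_diagonal (c : ι → R) :
    eigenblockDet t s (diagonal c) = ∏ i ∈ Finset.univ.filter (t · = s), c i := by
  rw [eigenblockDet, toBlock_diagonal_self, det_diagonal]
  exact (Finset.prod_subtype _ (fun _ => by simp) c).symm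

theorem eigenblockDet_mul [NoZeroDivisors R] {M : Matrix ι ι R} (hM : Commute (diagonal t) M)
    (N : Matrix ι ι R) : eigenblockDet t s (M * N) = eigenblockDet t s M * eigenblockDet t s N := by
  have hoff : M.toBlock (t · = s) (fun i => ¬ t i = s) = 0 := by
    ext ⟨a, ha⟩ ⟨b, hb⟩
    exact apply_eq_zero_of_commute_diagonal hM (ha.trans_ne (Ne.symm hb))
  rw [eigenblockDet, toBlock_mul_eq_add _ (t · = s), hoff, Matrix.zero_mul, add_zero, det_mul]
  rfl

theorem eigenblockDet_commutator [NoZeroDivisors R] {A B : Matrix ι ι R}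
    (hA : Commute (diagonal t) A) (hB : Commute (diagonal t) B)
    (hAdet : IsUnit A.det) (hBdet : IsUnit B.det) :
    eigenblockDet t s (A * B * A⁻¹ * B⁻¹) = 1 := by
  have hA' := commute_nonsing_inv_right hAdet hA
  have hAinv : eigenblockDet t s A * eigenblockDet t s A⁻¹ = 1 := by
    rw [← eigenblockDet_mul hA, mul_nonsing_inv _ hAdet, eigenblockDet_one]
  have hBinv : eigenblockDet t s B * eigenblockDet t s B⁻¹ = 1 := by
    rw [← eigenblockDet_mul hB, mul_nonsing_inv _ hBdet, eigenblockDet_one]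
  rw [eigenblockDet_mul ((hA.mul_right hB).mul_right hA'), eigenblockDet_mul (hA.mul_right hB),
    eigenblockDet_mul hA]
  linear_combination eigenblockDet t s B * eigenblockDet t s B⁻¹ * hAinv + hBinv

theorem eigenblockDet_list_prod [NoZeroDivisors R] {L : List (Matrix ι ι R)}
    (hL : ∀ M ∈ L, Commute (diagonal t) M ∧ eigenblockDet t s M = 1) :
    eigenblockDet t s L.prod = 1 := by
  induction L with
  | nil => exact eigenblockDet_one
  | cons M L ih =>
    obtain ⟨hM, hM1⟩ := hL M List.mem_cons_self
    rw [List.prod_cons, eigenblockDet_mul hM, hM1, ih fun N hN => hL N (List.mem_cons_of_mem M hN),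
      one_mul]

end Matrix

open Matrix in
theorem stmt_6_general (n g : ℕ)
    (c t : Fin n → ℂ)
    (hsub : ∀ S : Finset (Fin n), S.Nonempty → S ≠ Finset.univ → ∏ i ∈ S, c i ≠ 1)
    (h : ℕ → Matrix (Fin n) (Fin n) ℂ)
    (hdet : ∀ j, j < 2 * g → (h j).det = 1)
    (hprod : ((List.range g).map fun j =>
        h (2 * j) * h (2 * j + 1) * (h (2 * j))⁻¹ * (h (2 * j + 1))⁻¹).prod
      = Matrix.diagonal c)
    (hcomm : ∀ j, j < 2 * g → Matrix.diagonal t * h j = h j * Matrix.diagonal t) :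
    ∀ i j : Fin n, t i = t j := by
  intro i j
  by_contra hij
  refine hsub (Finset.univ.filter (t · = t i)) ⟨i, by simp⟩
    (fun huniv => hij (Finset.mem_filter.1 (huniv ▸ Finset.mem_univ j)).2.symm) ?_
  rw [← eigenblockDet_diagonal, ← hprod]
  refine eigenblockDet_list_prod fun M hM => ?_
  obtain ⟨k, hk, rfl⟩ := List.mem_map.1 hM
  have hkg := List.mem_range.1 hk
  have hA : Commute (diagonal t) (h (2 * k)) := hcomm _ (by omega)
  have hB : Commute (diagonal t) (h (2 * k + 1)) := hcomm _ (by omega)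
  have hAdet : IsUnit (h (2 * k)).det := by simp [hdet _ (by omega : 2 * k < 2 * g)]
  have hBdet : IsUnit (h (2 * k + 1)).det := by simp [hdet _ (by omega : 2 * k + 1 < 2 * g)]
  exact ⟨((hA.mul_right hB).mul_right (commute_nonsing_inv_right hAdet hA)).mul_right
      (commute_nonsing_inv_right hBdet hB), eigenblockDet_commutator hA hB hAdet hBdet⟩

/-- Let `c = diag(c_1,…,c_n) ∈ SU(n)` with no product over a proper nonempty subset of the
`c_i` equal to `1`, and let `h_1, …, h_{2g} ∈ SU(n)` satisfy `∏_{j=1}^g [h_{2j-1}, h_{2j}] = c`.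
If a diagonal matrix `t = diag(t_1,…,t_n) ∈ SU(n)` commutes with every `h_j`, then `t` is a
scalar matrix. -/
theorem stmt_6 (n g : ℕ) (hn : 2 ≤ n) (hg : 1 ≤ g)
    (c t : Fin n → ℂ)
    (hcnorm : ∀ i, ‖c i‖ = 1) (hcdet : ∏ i, c i = 1)
    (htnorm : ∀ i, ‖t i‖ = 1) (htdet : ∏ i, t i = 1)
    (hsub : ∀ S : Finset (Fin n), S.Nonempty → S ≠ Finset.univ → ∏ i ∈ S, c i ≠ 1)
    (h : ℕ → Matrix (Fin n) (Fin n) ℂ)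
    (hunit : ∀ j, j < 2 * g → h j * (h j).conjTranspose = 1)
    (hdet : ∀ j, j < 2 * g → (h j).det = 1)
    (hprod : ((List.range g).map fun j =>
        h (2 * j) * h (2 * j + 1) * (h (2 * j))⁻¹ * (h (2 * j + 1))⁻¹).prod
      = Matrix.diagonal c)
    (hcomm : ∀ j, j < 2 * g → Matrix.diagonal t * h j = h j * Matrix.diagonal t) :
    ∀ i j : Fin n, t i = t j :=
  stmt_6_general n g c t hsub h hdet hprod hcomm
end

section
/- Let n ≥ 2 and 1 ≤ r ≤ n-1. Let T_r ⊂ SU(r), T_{n-r} ⊂ SU(n-r), and T_n ⊂ SU(n) be the diagonal maximal tori. Define φ : U(1) × T_r × T_{n-r} → T_n by φ(s, t, u) = diag(s^{n-r} t, s^{-r} u) (block diagonal with first block the r×r matrix s^{n-r} t and second block the (n-r)×(n-r) matrix s^{-r} u). Then φ is a surjective group homomorphism whose kernel has exactly r(n-r) elements. -/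
/-!
Split `Fin n` into the first `r` and the last `n - r` indices. In the product of the entries
of `diag(s^(n-r) t, s^(-r) u)` the powers of `s` cancel, since `(n-r)·r = r·(n-r)`, so the image
lies in `T_n`. Given `v = (x, y) ∈ T_n`, pick an `r(n-r)`-th root `s` of `∏ x`; then
`t = s^(-(n-r)) x` and `u = s^r y` lie in the tori and map to `v`. The kernel consists of the
triples `(s, s^(-(n-r)), s^r)` with `s^(r(n-r)) = 1`, so it is in bijection with the
`r(n-r)`-th roots of unity.
-/

/-- The maximal torus `T_m ⊂ SU(m)`: tuples of unit complex numbers with product `1`,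
realized as a subgroup of `Fin m → Circle`. -/
noncomputable def Torus (m : ℕ) : Subgroup (Fin m → Circle) where
  carrier := {t | ∏ i, t i = 1}
  mul_mem' := by
    intro a b ha hb
    simp only [Set.mem_setOf_eq] at *
    simp [Pi.mul_apply, Finset.prod_mul_distrib, ha, hb]
  one_mem' := by simp
  inv_mem' := by
    intro a ha
    simp only [Set.mem_setOf_eq] at *
    rw [show (∏ i, a⁻¹ i) = (∏ i, a i)⁻¹ by simp [Finset.prod_inv_distrib], ha]; simp


open Finset

section BlockJoin

variable {G : Type*} {n r : ℕ}

def blockJoin (x : Fin r → G) (y : Fin (n - r) → G) : Fin n → G := fun i =>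
  if h : i.val < r then x ⟨i, h⟩ else y ⟨i - r, by omega⟩

lemma blockJoin_castLE (hrn : r ≤ n) (x : Fin r → G) (y : Fin (n - r) → G) (i : Fin r) :
    blockJoin x y (Fin.castLE hrn i) = x i := by
  simp [blockJoin]

lemma blockJoin_addNat (x : Fin r → G) (y : Fin (n - r) → G) (j : Fin (n - r)) :
    blockJoin x y ⟨r + j, by omega⟩ = y j := by
  simp [blockJoin]

lemma blockJoin_split (hrn : r ≤ n) (v : Fin n → G) :
    blockJoin (fun i => v (Fin.castLE hrn i)) (fun j => v ⟨r + j, by omega⟩) = v := by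
  funext i
  by_cases h : (i : ℕ) < r
  · simp [blockJoin, h]
  · simp only [blockJoin, h, dite_false]
    congr
    omega

lemma blockJoin_mul [Mul G] (x x' : Fin r → G) (y y' : Fin (n - r) → G) :
    blockJoin (x * x') (y * y') = blockJoin x y * blockJoin x' y' := by
  funext i
  simp only [blockJoin, Pi.mul_apply]
  split_ifs <;> rfl

lemma blockJoin_eq_one_iff [One G] (hrn : r ≤ n) (x : Fin r → G) (y : Fin (n - r) → G) :
    blockJoin x y = 1 ↔ x = 1 ∧ y = 1 := by
  refine ⟨fun h => ⟨funext fun i => ?_, funext fun j => ?_⟩, fun ⟨hx, hy⟩ => ?_⟩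
  · rw [← blockJoin_castLE hrn x y, h, Pi.one_apply, Pi.one_apply]
  · rw [← blockJoin_addNat x y, h, Pi.one_apply, Pi.one_apply]
  · subst hx hy
    funext i
    unfold blockJoin
    split_ifs <;> rfl

lemma prod_blockJoin [CommMonoid G] (hrn : r ≤ n) (x : Fin r → G) (y : Fin (n - r) → G) :
    ∏ i, blockJoin x y i = (∏ i, x i) * ∏ j, y j := by
  rw [← (finCongr (Nat.add_sub_cancel' hrn)).prod_comp, Fin.prod_univ_add]
  exact congr_arg₂ _ (prod_congr rfl fun i _ => blockJoin_castLE hrn x y i)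
    (prod_congr rfl fun j _ => blockJoin_addNat x y j)

end BlockJoin

lemma Circle.exists_pow_eq {k : ℕ} (hk : k ≠ 0) (z : Circle) : ∃ s : Circle, s ^ k = z := by
  obtain ⟨x, rfl⟩ := Circle.exp_surjective z
  exact ⟨Circle.exp (x / k), by
    rw [← Circle.exp_natCast_mul, mul_div_cancel₀ _ (Nat.cast_ne_zero.2 hk)]⟩

lemma Circle.card_pow_eq_one {k : ℕ} (hk : k ≠ 0) : Nat.card {s : Circle // s ^ k = 1} = k := by
  have hk0 : 0 < k := Nat.pos_of_ne_zero hk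
  have mem_circle {z : ℂ} (hz : z ^ k = 1) : z ∈ Submonoid.unitSphere ℂ :=
    mem_sphere_zero_iff_norm.2 (Complex.norm_eq_one_of_pow_eq_one hz hk)
  let e : {s : Circle // s ^ k = 1} ≃ Polynomial.nthRootsFinset k (1 : ℂ) :=
    { toFun s := ⟨s.1, (Polynomial.mem_nthRootsFinset hk0 1).2 <| by
        rw [← Circle.coe_pow, s.2, Circle.coe_one]⟩
      invFun z := ⟨⟨z.1, mem_circle ((Polynomial.mem_nthRootsFinset hk0 1).1 z.2)⟩,
        Circle.ext ((Polynomial.mem_nthRootsFinset hk0 1).1 z.2)⟩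
      left_inv _ := rfl
      right_inv _ := rfl }
  rw [Nat.card_congr e, Nat.card_eq_fintype_card, Fintype.card_coe]
  exact (Complex.isPrimitiveRoot_exp k hk).card_nthRootsFinset

lemma mem_torus {m : ℕ} {t : Fin m → Circle} : t ∈ Torus m ↔ ∏ i, t i = 1 := Iff.rfl

lemma const_mem_torus {m : ℕ} {c : Circle} : (fun _ => c) ∈ Torus m ↔ c ^ m = 1 := by
  simp [mem_torus]

section TorusCover

variable {n r : ℕ}

noncomputable def coverFun (s : Circle) (t : Fin r → Circle) (u : Fin (n - r) → Circle) :
    Fin n → Circle :=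
  blockJoin (fun i => s ^ (n - r) * t i) (fun j => s ^ (-(r : ℤ)) * u j)

lemma prod_coverFun (hrn : r ≤ n) (s : Circle) (t : Fin r → Circle)
    (u : Fin (n - r) → Circle) :
    ∏ i, coverFun s t u i = (∏ i, t i) * ∏ j, u j := by
  rw [coverFun, prod_blockJoin hrn, prod_mul_distrib, prod_mul_distrib, prod_const, prod_const,
    card_univ, card_univ, Fintype.card_fin, Fintype.card_fin, zpow_neg, zpow_natCast, inv_pow,
    ← pow_mul, ← pow_mul, mul_comm r, mul_mul_mul_comm, mul_inv_cancel, one_mul]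

lemma coverFun_mul (s s' : Circle) (t t' : Fin r → Circle) (u u' : Fin (n - r) → Circle) :
    coverFun (s * s') (t * t') (u * u') = coverFun s t u * coverFun s' t' u' := by
  rw [coverFun, coverFun, coverFun, ← blockJoin_mul]
  congr 1 <;> funext i <;> simp only [Pi.mul_apply, mul_pow, mul_zpow] <;>
    exact mul_mul_mul_comm _ _ _ _

lemma coverFun_eq_one_iff (hrn : r ≤ n) (s : Circle) (t : Fin r → Circle)
    (u : Fin (n - r) → Circle) :
    coverFun s t u = 1 ↔ t = (fun _ => (s ^ (n - r))⁻¹) ∧ u = fun _ => s ^ r := by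
  simp only [coverFun, blockJoin_eq_one_iff hrn, funext_iff, Pi.one_apply, mul_eq_one_iff_eq_inv',
    zpow_neg, inv_inv, zpow_natCast]

noncomputable def torusCover (hrn : r ≤ n) : Circle × Torus r × Torus (n - r) →* Torus n where
  toFun p := ⟨coverFun p.1 p.2.1 p.2.2, by
    rw [mem_torus, prod_coverFun hrn, mem_torus.1 p.2.1.2, mem_torus.1 p.2.2.2, one_mul]⟩
  map_one' := Subtype.ext <| (coverFun_eq_one_iff hrn _ _ _).2 ⟨by ext; simp, by ext; simp⟩
  map_mul' p q := Subtype.ext <| coverFun_mul _ _ _ _ _ _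

lemma mem_ker_torusCover_iff (hrn : r ≤ n) {p : Circle × Torus r × Torus (n - r)} :
    p ∈ (torusCover hrn).ker ↔
      (p.2.1 : Fin r → Circle) = (fun _ => (p.1 ^ (n - r))⁻¹) ∧
        (p.2.2 : Fin (n - r) → Circle) = fun _ => p.1 ^ r := by
  rw [MonoidHom.mem_ker, ← OneMemClass.coe_eq_one]
  exact coverFun_eq_one_iff hrn _ _ _

lemma torusCover_surjective (hrn : r ≤ n) (hk : r * (n - r) ≠ 0) :
    Function.Surjective (torusCover hrn) := by
  rintro ⟨v, hv⟩
  set x : Fin r → Circle := fun i => v (Fin.castLE hrn i)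
  set y : Fin (n - r) → Circle := fun j => v ⟨r + j, by omega⟩
  obtain ⟨s, hs⟩ := Circle.exists_pow_eq (mul_comm r (n - r) ▸ hk) (∏ i, x i)
  have hv' : coverFun s (fun i => (s ^ (n - r))⁻¹ * x i) (fun j => s ^ r * y j) = v := by
    rw [coverFun, ← blockJoin_split hrn v]
    congr 1 <;> funext i <;> simp [zpow_neg, x, y]
  have ht : (fun i => (s ^ (n - r))⁻¹ * x i) ∈ Torus r := by
    rw [mem_torus, prod_mul_distrib, prod_const, card_univ, Fintype.card_fin, inv_pow, ← pow_mul,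
      hs, inv_mul_cancel]
  have hu : (fun j => s ^ r * y j) ∈ Torus (n - r) := by
    have hprod := prod_coverFun hrn s (fun i => (s ^ (n - r))⁻¹ * x i) (fun j => s ^ r * y j)
    rw [hv', mem_torus.1 hv, mem_torus.1 ht, one_mul] at hprod
    exact mem_torus.2 hprod.symm
  exact ⟨(s, ⟨_, ht⟩, ⟨_, hu⟩), Subtype.ext hv'⟩

noncomputable def kerTorusCoverEquiv (hrn : r ≤ n) :
    (torusCover hrn).ker ≃ {s : Circle // s ^ (r * (n - r)) = 1} where
  toFun p := ⟨p.1.1, by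
    have ht := p.1.2.1.2
    rw [((mem_ker_torusCover_iff hrn).1 p.2).1, const_mem_torus, inv_pow, inv_eq_one,
      ← pow_mul, mul_comm] at ht
    exact ht⟩
  invFun s := ⟨(s.1,
      ⟨_, const_mem_torus.2 (by rw [inv_pow, ← pow_mul, mul_comm, s.2, inv_one])⟩,
      ⟨_, const_mem_torus.2 (by rw [← pow_mul, s.2])⟩),
    (mem_ker_torusCover_iff hrn).2 ⟨rfl, rfl⟩⟩
  left_inv p := by
    obtain ⟨ht, hu⟩ := (mem_ker_torusCover_iff hrn).1 p.2
    exact Subtype.ext (Prod.ext rfl (Prod.ext (Subtype.ext ht.symm) (Subtype.ext hu.symm)))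
  right_inv _ := rfl

end TorusCover

/-- The map `φ(s, t, u) = diag(s^(n-r) t, s^(-r) u)` is a surjective group homomorphism
`U(1) × T_r × T_{n-r} → T_n` whose kernel has exactly `r(n-r)` elements. -/
theorem stmt_14 (n r : ℕ) (hr1 : 1 ≤ r) (hr2 : r ≤ n - 1) :
    ∃ φ : (Circle × Torus r × Torus (n - r)) →* Torus n,
      (∀ (s : Circle) (t : Torus r) (u : Torus (n - r)) (i : Fin n),
        (φ (s, t, u) : Fin n → Circle) i =
          if h : i.val < r then s ^ (n - r) * (t : Fin r → Circle) ⟨i.val, h⟩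
          else s ^ (-(r : ℤ)) *
            (u : Fin (n - r) → Circle) ⟨i.val - r, by have := i.isLt; omega⟩) ∧
      Function.Surjective φ ∧ Nat.card (MonoidHom.ker φ) = r * (n - r) := by
  have hrn : r ≤ n := by omega
  have hk : r * (n - r) ≠ 0 := Nat.mul_ne_zero (by omega) (by omega)
  refine ⟨torusCover hrn, fun _ _ _ _ => rfl, torusCover_surjective hrn hk, ?_⟩
  rw [Nat.card_congr (kerTorusCoverEquiv hrn), Circle.card_pow_eq_one hk]
end
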